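/- With B and w as above, for any g₃ ∈ S(ℝ^d) and any k ∈ C_c(ℝ^d), the product-convolution map f ↦ k·(g₃∗f) is a bounded linear operator from B into L¹_w(ℝ^d): there is C > 0 with ∫ |k(x)|·|(g₃∗f)(x)|·w(x) dx ≤ C‖f‖_B for all f ∈ B. -/
import Mathlib


open MeasureTheory

/-- In the setting of a translation-invariant Banach space `B ⊆ S'` with
`‖T_x f‖_B ≤ w(x)‖f‖_B` for a continuous submultiplicative weight `w`, for any
Schwartz-induced functional `σ₃ ∈ B'` and any continuous compactly supported
`k`, the product-convolution map `f ↦ k·(g₃∗f)` is bounded from `B` into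
`L¹_w`. -/
theorem product_convolution_bounded (d : ℕ)
    {B : Type*} [NormedAddCommGroup B] [NormedSpace ℝ B] [CompleteSpace B]
    (w : EuclideanSpace ℝ (Fin d) → ℝ)
    (hwc : Continuous w) (hw0 : ∀ x, 0 < w x)
    (hwsub : ∀ x y, w (x + y) ≤ w x * w y)
    (T : EuclideanSpace ℝ (Fin d) → B →L[ℝ] B)
    (hTnorm : ∀ x (f : B), ‖T x f‖ ≤ w x * ‖f‖)
    (hTcont : ∀ f : B, Continuous fun x => T x f)
    (σ₃ : B →L[ℝ] ℝ)
    (k : EuclideanSpace ℝ (Fin d) → ℝ)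
    (hkc : Continuous k) (hkcs : HasCompactSupport k) :
    ∃ C > (0 : ℝ), ∀ f : B,
      (∫ x, |k x| * |σ₃ (T (-x) f)| * w x) ≤ C * ‖f‖ := by
  set g : EuclideanSpace ℝ (Fin d) → ℝ :=
    fun x => |k x| * (‖σ₃‖ * (w (-x) * 1)) * w x with hg
  have hgc : Continuous g := by
    fun_prop
  have hgcs : HasCompactSupport g := by
    apply HasCompactSupport.mul_right
    apply HasCompactSupport.mul_right
    exact hkcs.abs
  have hgint : Integrable g := hgc.integrable_of_hasCompactSupport hgcs
  have hgnn : ∀ x, 0 ≤ g x := fun x => by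
    have := (hw0 (-x)).le
    have := (hw0 x).le
    positivity
  have hInn : 0 ≤ ∫ x, g x := integral_nonneg hgnn
  refine ⟨(∫ x, g x) + 1, by linarith, fun f => ?_⟩
  have hbound : ∀ x, |k x| * |σ₃ (T (-x) f)| * w x ≤ g x * ‖f‖ := by
    intro x
    have h1 : |σ₃ (T (-x) f)| ≤ ‖σ₃‖ * (w (-x) * ‖f‖) := by
      calc |σ₃ (T (-x) f)| = ‖σ₃ (T (-x) f)‖ := rfl
        _ ≤ ‖σ₃‖ * ‖T (-x) f‖ := σ₃.le_opNorm _
        _ ≤ ‖σ₃‖ * (w (-x) * ‖f‖) := by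
            exact mul_le_mul_of_nonneg_left (hTnorm _ _) (norm_nonneg _)
    have hk0 : (0:ℝ) ≤ |k x| := abs_nonneg _
    have hw0x := (hw0 x).le
    calc |k x| * |σ₃ (T (-x) f)| * w x
        ≤ |k x| * (‖σ₃‖ * (w (-x) * ‖f‖)) * w x := by
          apply mul_le_mul_of_nonneg_right _ hw0x
          exact mul_le_mul_of_nonneg_left h1 hk0
      _ = g x * ‖f‖ := by simp [hg]; ring
  have hfint : Integrable fun x => |k x| * |σ₃ (T (-x) f)| * w x := by
    apply Continuous.integrable_of_hasCompactSupport
    · have : Continuous fun x : EuclideanSpace ℝ (Fin d) => T (-x) f :=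
        (hTcont f).comp continuous_neg
      fun_prop
    · apply HasCompactSupport.mul_right
      apply HasCompactSupport.mul_right
      exact hkcs.abs
  calc (∫ x, |k x| * |σ₃ (T (-x) f)| * w x)
      ≤ ∫ x, g x * ‖f‖ := integral_mono hfint (hgint.mul_const _) hbound
    _ = (∫ x, g x) * ‖f‖ := by rw [integral_mul_const]
    _ ≤ ((∫ x, g x) + 1) * ‖f‖ := by
        apply mul_le_mul_of_nonneg_right _ (norm_nonneg f)
        linarith
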